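/- Let N ≥ 1, μ ∈ ℤ and t > 0. Then ⟨∏_{l=1}^N e^{iμθ_l} e^{(√t/2)(z_l + z_l^{−1})}⟩_{U(N)} = det[ I_{μ+j−k}(√t) ]_{j,k=1,…,N}, i.e. the U(N) average equals the N×N Toeplitz determinant whose (j,k) entry is the modified Bessel function of order μ+j−k evaluated at √t. -/

import Mathlib

open MeasureTheory Finset

/-- The U(N) average ⟨∏_{l=1}^N w(z_l)⟩_{U(N)}, where w is given as a function of θ
(with z = e^{iθ}). -/
noncomputable def uAvg (N : ℕ) (w : ℝ → ℂ) : ℂ :=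
  (((2 * Real.pi) ^ N * (N.factorial : ℝ) : ℝ) : ℂ)⁻¹ *
    ∫ θ : Fin N → ℝ in Set.univ.pi (fun _ => Set.Icc (-Real.pi) Real.pi),
      (∏ l, w (θ l)) *
      ((∏ p ∈ Finset.univ.filter (fun p : Fin N × Fin N => p.1 < p.2),
        (‖Complex.exp (Complex.I * θ p.2) - Complex.exp (Complex.I * θ p.1)‖) ^ 2
        : ℝ) : ℂ)

/-- Modified Bessel function I_ν(x) = ∑_{k=0}^∞ (x/2)^{ν+2k}/(k!·Γ(ν+k+1)). -/
noncomputable def besselI (ν x : ℝ) : ℝ :=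
  ∑' k : ℕ, (x / 2) ^ (ν + 2 * (k : ℝ)) / ((k.factorial : ℝ) * Real.Gamma (ν + (k : ℝ) + 1))

section aux
open Complex

lemma L0 (m : ℤ) : (∫ θ : ℝ in Set.Icc (-Real.pi) Real.pi, Complex.exp (Complex.I * (m:ℂ) * (θ:ℂ)))
    = if m = 0 then ((2 * Real.pi : ℝ) : ℂ) else 0 := by
  rw [MeasureTheory.integral_Icc_eq_integral_Ioc,
    ← intervalIntegral.integral_of_le (by linarith [Real.pi_pos])]
  by_cases hm : m = 0
  · subst hm
    simp [intervalIntegral.integral_const]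
    norm_num
    ring
  · rw [if_neg hm]
    have hc : (Complex.I * (m:ℂ)) ≠ 0 := by
      simp [Complex.I_ne_zero, hm]
    rw [integral_exp_mul_complex (a := -Real.pi) (b := Real.pi) hc]
    have : Complex.exp (Complex.I * (m:ℂ) * (Real.pi:ℂ)) =
        Complex.exp (Complex.I * (m:ℂ) * ((-Real.pi : ℝ):ℂ)) := by
      rw [show Complex.I * (m:ℂ) * ((-Real.pi : ℝ):ℂ) =
        Complex.I * (m:ℂ) * (Real.pi:ℂ) + (-m : ℤ) * (2 * (Real.pi:ℂ) * Complex.I) by push_cast; ring,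
        Complex.exp_add, Complex.exp_int_mul_two_pi_mul_I, mul_one]
    rw [this, sub_self, zero_div]


lemma besselI_int (m : ℤ) (x : ℝ) :
    besselI (m:ℝ) x = ∑' k : ℕ,
      (x/2) ^ (m.natAbs + 2*k) / ((k.factorial : ℝ) * ((m.natAbs + k).factorial : ℝ)) := by
  rw [besselI]
  rcases le_or_gt 0 m with hm | hm
  · obtain ⟨a, rfl⟩ := Int.eq_ofNat_of_zero_le hm
    apply tsum_congr; intro k
    have e1 : ((a:ℤ):ℝ) + 2*(k:ℝ) = (((a:ℤ).natAbs + 2*k : ℕ) : ℝ) := by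
      simp [Int.natAbs_natCast]
    rw [e1, Real.rpow_natCast]
    congr 1
    have e2 : ((a:ℤ):ℝ) + (k:ℝ) + 1 = (((a + k : ℕ)):ℝ) + 1 := by push_cast; ring
    rw [e2, Real.Gamma_nat_eq_factorial]
    simp [Int.natAbs_natCast]
  · set n := m.natAbs with hn
    have hmn : (m:ℝ) = -(n:ℝ) := by
      have h : (n:ℤ) = -m := by omega
      have := congrArg (fun z : ℤ => (z:ℝ)) h
      push_cast at this
      linarith
    have hfg : ∀ q : ℕ,
        (x/2) ^ ((m:ℝ) + 2 * ((n + q : ℕ):ℝ)) /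
          (((n+q).factorial : ℝ) * Real.Gamma ((m:ℝ) + ((n + q : ℕ):ℝ) + 1))
        = (x/2) ^ (n + 2*q) / ((q.factorial : ℝ) * ((n + q).factorial : ℝ)) := by
      intro q
      have e1 : (m:ℝ) + 2 * ((n + q : ℕ):ℝ) = ((n + 2*q : ℕ) : ℝ) := by
        rw [hmn]; push_cast; ring
      have e2 : (m:ℝ) + ((n + q : ℕ):ℝ) + 1 = (q:ℝ) + 1 := by rw [hmn]; push_cast; ring
      rw [e1, Real.rpow_natCast, e2, Real.Gamma_nat_eq_factorial,
        mul_comm ((q.factorial : ℝ)) (((n + q).factorial : ℝ))]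
    have hzero : ∀ k : ℕ, k < n →
        (x/2) ^ ((m:ℝ) + 2 * (k:ℝ)) / ((k.factorial : ℝ) * Real.Gamma ((m:ℝ) + (k:ℝ) + 1)) = 0 := by
      intro k hk
      have e : (m:ℝ) + (k:ℝ) + 1 = -(((n - k - 1 : ℕ)):ℝ) := by
        rw [hmn]
        have h1 : ((n - k - 1 : ℕ) : ℝ) = (n:ℝ) - k - 1 := by
          have h2 : k + 1 ≤ n := hk
          have h3 : (n - k - 1 : ℕ) = n - (k+1) := by omega
          rw [h3, Nat.cast_sub h2]
          push_cast; ring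
        rw [h1]; ring
      rw [e, Real.Gamma_neg_nat_eq_zero, mul_zero, div_zero]
    refine tsum_eq_tsum_of_ne_zero_bij (fun q => n + q.val) ?_ ?_ ?_
    · intro a b hab
      simp only at hab
      exact Subtype.ext (by omega)
    · intro k hk
      rcases lt_or_ge k n with h | h
      · exact absurd (hzero k h) hk
      · have hq : n + (k - n) = k := by omega
        have h2 := hfg (k - n)
        rw [hq] at h2
        refine ⟨⟨k - n, ?_⟩, by simpa using hq⟩
        simp only [Function.mem_support, hq]
        rw [← h2]
        exact hk
    · intro q
      simpa using hfg q.val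

lemma cexp_tsum (w : ℂ) : Complex.exp w = ∑' p : ℕ, w ^ p / (p.factorial : ℂ) := by
  rw [Complex.exp_eq_exp_ℂ, NormedSpace.exp_eq_tsum_div]

lemma summable_norm_exp_term (w : ℂ) : Summable fun p : ℕ => ‖w ^ p / (p.factorial : ℂ)‖ := by
  have : ∀ p : ℕ, ‖w ^ p / (p.factorial : ℂ)‖ = ‖w‖ ^ p / (p.factorial : ℝ) := by
    intro p
    rw [norm_div, norm_pow]
    norm_num
  exact (summable_congr this).mpr (Real.summable_pow_div_factorial ‖w‖)

lemma fourier_bessel (m : ℤ) {x : ℝ} (hx : 0 < x) :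
    (∫ θ : ℝ in Set.Icc (-Real.pi) Real.pi,
      Complex.exp (Complex.I * (m:ℂ) * (θ:ℂ)) *
      Complex.exp (((x / 2 : ℝ) : ℂ) *
        (Complex.exp (Complex.I * (θ:ℂ)) + (Complex.exp (Complex.I * (θ:ℂ)))⁻¹)))
    = ((2 * Real.pi * besselI (m:ℝ) x : ℝ) : ℂ) := by
  set c : ℂ := ((x / 2 : ℝ) : ℂ) with hc
  -- the term family
  set F : ℕ × ℕ → ℝ → ℂ := fun pq θ =>
    Complex.exp (Complex.I * ((m + pq.1 - pq.2 : ℤ) : ℂ) * (θ:ℂ)) *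
      (((x/2) ^ (pq.1 + pq.2) / ((pq.1.factorial : ℝ) * (pq.2.factorial : ℝ)) : ℝ) : ℂ) with hF
  -- pointwise expansion
  have hpt : ∀ θ : ℝ,
      Complex.exp (Complex.I * (m:ℂ) * (θ:ℂ)) *
        Complex.exp (c * (Complex.exp (Complex.I * (θ:ℂ)) + (Complex.exp (Complex.I * (θ:ℂ)))⁻¹))
      = ∑' pq : ℕ × ℕ, F pq θ := by
    intro θ
    set z : ℂ := Complex.exp (Complex.I * (θ:ℂ)) with hz
    rw [mul_add, Complex.exp_add, cexp_tsum (c * z), cexp_tsum (c * z⁻¹),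
      tsum_mul_tsum_of_summable_norm (summable_norm_exp_term _) (summable_norm_exp_term _),
      ← tsum_mul_left]
    apply tsum_congr
    rintro ⟨p, q⟩
    have hzinv : z⁻¹ = Complex.exp (-(Complex.I * (θ:ℂ))) := by
      rw [hz, ← Complex.exp_neg]
    have hzp : z ^ p = Complex.exp ((p:ℂ) * (Complex.I * (θ:ℂ))) := by
      rw [Complex.exp_nat_mul]
    have hzq : (z⁻¹) ^ q = Complex.exp ((q:ℂ) * (-(Complex.I * (θ:ℂ)))) := by
      rw [hzinv, Complex.exp_nat_mul]
    rw [hF]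
    simp only []
    rw [mul_pow, mul_pow, hzp, hzq]
    have : Complex.exp (Complex.I * (m:ℂ) * (θ:ℂ)) *
        (c ^ p * Complex.exp ((p:ℂ) * (Complex.I * (θ:ℂ))) / (p.factorial : ℂ) *
         (c ^ q * Complex.exp ((q:ℂ) * (-(Complex.I * (θ:ℂ)))) / (q.factorial : ℂ)))
        = (Complex.exp (Complex.I * (m:ℂ) * (θ:ℂ)) * Complex.exp ((p:ℂ) * (Complex.I * (θ:ℂ))) *
            Complex.exp ((q:ℂ) * (-(Complex.I * (θ:ℂ))))) *
          (c ^ (p+q) / ((p.factorial : ℂ) * (q.factorial : ℂ))) := by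
      rw [pow_add]; ring
    rw [this, ← Complex.exp_add, ← Complex.exp_add]
    congr 1
    · congr 1
      push_cast
      ring
    · rw [hc]
      push_cast
      ring
  rw [MeasureTheory.integral_congr_ae (Filter.Eventually.of_forall hpt)]
  -- swap integral and sum
  have hmeas : MeasurableSet (Set.Icc (-Real.pi) Real.pi) := measurableSet_Icc
  have hFcont : ∀ pq : ℕ × ℕ, Continuous (F pq) := by
    intro pq
    rw [hF]
    exact (Complex.continuous_exp.comp (by continuity)).mul continuous_const
  have hFint : ∀ pq : ℕ × ℕ, Integrable (F pq) (volume.restrict (Set.Icc (-Real.pi) Real.pi)) := by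
    intro pq
    exact (hFcont pq).integrableOn_Icc
  have hFnorm : ∀ pq : ℕ × ℕ, ∀ θ : ℝ,
      ‖F pq θ‖ = (x/2) ^ (pq.1 + pq.2) / ((pq.1.factorial : ℝ) * (pq.2.factorial : ℝ)) := by
    rintro ⟨p, q⟩ θ
    rw [hF]
    simp only [norm_mul, Complex.norm_exp]
    have h1 : (Complex.I * ((m + p - q : ℤ) : ℂ) * (θ:ℂ)).re = 0 := by
      simp [Complex.mul_re, Complex.mul_im]
    rw [h1, Real.exp_zero, one_mul]
    simp only [Complex.norm_real, Real.norm_eq_abs]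
    exact abs_of_nonneg (by positivity)
  have hsum2 : Summable fun pq : ℕ × ℕ =>
      (x/2) ^ (pq.1 + pq.2) / ((pq.1.factorial : ℝ) * (pq.2.factorial : ℝ)) := by
    have h := (Real.summable_pow_div_factorial (x/2)).mul_of_nonneg
      (Real.summable_pow_div_factorial (x/2)) (fun p => by positivity) (fun q => by positivity)
    apply Summable.congr h
    rintro ⟨p, q⟩
    simp only []
    rw [pow_add]
    ring
  have hswap := MeasureTheory.integral_tsum_of_summable_integral_norm (μ := volume.restrict (Set.Icc (-Real.pi) Real.pi)) hFint ?_
  · rw [← hswap]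
    -- compute each integral
    have hint : ∀ pq : ℕ × ℕ, (∫ θ : ℝ in Set.Icc (-Real.pi) Real.pi, F pq θ)
        = (if (m + pq.1 - pq.2 : ℤ) = 0 then ((2 * Real.pi : ℝ) : ℂ) else 0) *
          (((x/2) ^ (pq.1 + pq.2) / ((pq.1.factorial : ℝ) * (pq.2.factorial : ℝ)) : ℝ) : ℂ) := by
      rintro ⟨p, q⟩
      rw [hF]
      simp only []
      rw [MeasureTheory.integral_mul_const, L0]
    rw [tsum_congr hint]
    -- collapse to single sum
    set n : ℕ := m.natAbs with hnn
    have key : ∑' pq : ℕ × ℕ,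
        (if (m + pq.1 - pq.2 : ℤ) = 0 then ((2 * Real.pi : ℝ) : ℂ) else 0) *
          (((x/2) ^ (pq.1 + pq.2) / ((pq.1.factorial : ℝ) * (pq.2.factorial : ℝ)) : ℝ) : ℂ)
        = ∑' k : ℕ, ((2 * Real.pi * ((x/2) ^ (n + 2*k) / ((k.factorial : ℝ) * ((n + k).factorial : ℝ))) : ℝ) : ℂ) := by
      refine tsum_eq_tsum_of_ne_zero_bij
        (fun k => ((k.val + (-m).toNat, k.val + m.toNat) : ℕ × ℕ)) ?_ ?_ ?_
      · intro a b hab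
        simp only [Prod.mk.injEq] at hab
        exact Subtype.ext (by omega)
      · rintro ⟨p, q⟩ hpq
        have hcond : (m + p - q : ℤ) = 0 := by
          by_contra h
          simp only [Function.mem_support, if_neg h, zero_mul, ne_eq, not_true_eq_false] at hpq
        have hp : p = (p - (-m).toNat) + (-m).toNat := by omega
        have hq : q = (p - (-m).toNat) + m.toNat := by omega
        refine ⟨⟨p - (-m).toNat, ?_⟩, ?_⟩
        · simp only [Function.mem_support]
          intro h0
          rw [Complex.ofReal_eq_zero] at h0
          have : (0:ℝ) < 2 * Real.pi * ((x/2) ^ (n + 2*(p - (-m).toNat)) /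
              ((p - (-m).toNat).factorial * ((n + (p - (-m).toNat)).factorial : ℝ))) := by
            have := Real.pi_pos
            positivity
          linarith [this.ne' h0]
        · simp only [Prod.mk.injEq]
          constructor <;> omega
      · rintro ⟨k, hk⟩
        dsimp only
        have hcond : m + ((k + (-m).toNat : ℕ) : ℤ) - ((k + m.toNat : ℕ) : ℤ) = 0 := by
          push_cast; omega
        rw [if_pos hcond]
        have hfact : ((k + (-m).toNat).factorial : ℝ) * ((k + m.toNat).factorial : ℝ)
            = (k.factorial : ℝ) * ((n + k).factorial : ℝ) := by
          rcases le_or_gt 0 m with h | h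
          · have h1 : (-m).toNat = 0 := by omega
            have h2 : m.toNat = n := by omega
            rw [h1, h2, add_zero, add_comm k n]
          · have h1 : m.toNat = 0 := by omega
            have h2 : (-m).toNat = n := by omega
            rw [h1, h2, add_zero, add_comm k n, mul_comm]
        have hexp : (k + (-m).toNat) + (k + m.toNat) = n + 2*k := by omega
        rw [hexp, hfact]
        push_cast
        ring
    rw [key, ← Complex.ofReal_tsum]
    congr 1
    rw [besselI_int, ← tsum_mul_left]
  · apply Summable.congr (f := fun pq : ℕ × ℕ => 2 * Real.pi *
      ((x/2) ^ (pq.1 + pq.2) / ((pq.1.factorial : ℝ) * (pq.2.factorial : ℝ))))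
    · exact hsum2.mul_left _
    · intro pq
      rw [MeasureTheory.integral_congr_ae (Filter.Eventually.of_forall (fun θ => (hFnorm pq θ)))]
      rw [MeasureTheory.setIntegral_const]
      rw [Real.volume_real_Icc_of_le (by linarith [Real.pi_pos])]
      rw [sub_neg_eq_add, smul_eq_mul]
      ring


lemma prod_filter_lt {M : Type*} [CommMonoid M] {N : ℕ} (f : Fin N → Fin N → M) :
    ∏ p ∈ Finset.univ.filter (fun p : Fin N × Fin N => p.1 < p.2), f p.1 p.2
      = ∏ i : Fin N, ∏ j ∈ Finset.Ioi i, f i j := by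
  rw [Finset.prod_sigma']
  refine Finset.prod_nbij' (fun p => ⟨p.1, p.2⟩) (fun s => (s.1, s.2)) ?_ ?_ ?_ ?_ ?_
  · rintro ⟨a, b⟩ hab
    simp only [Finset.mem_filter, Finset.mem_univ, true_and] at hab
    simp [Finset.mem_sigma, Finset.mem_Ioi, hab]
  · rintro ⟨a, b⟩ hab
    simp only [Finset.mem_sigma, Finset.mem_univ, true_and, Finset.mem_Ioi] at hab
    simp [Finset.mem_filter, hab]
  · rintro ⟨a, b⟩ _; rfl
  · rintro ⟨a, b⟩ _; rfl
  · rintro ⟨a, b⟩ _; rfl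

lemma heine (N : ℕ) (w : ℝ → ℂ) (hw : Continuous w) :
    uAvg N w = Matrix.det (Matrix.of fun j k : Fin N =>
      (((2 * Real.pi : ℝ) : ℂ))⁻¹ *
        ∫ θ : ℝ in Set.Icc (-Real.pi) Real.pi,
          w θ * Complex.exp (Complex.I * ((((j:ℕ) : ℤ) - ((k:ℕ) : ℤ) : ℤ) : ℂ) * (θ:ℂ))) := by
  classical
  set g : ℤ → ℝ → ℂ := fun n θ => w θ * Complex.exp (Complex.I * (n:ℂ) * (θ:ℂ)) with hg
  set d : ℤ → ℂ := fun n => ∫ θ : ℝ in Set.Icc (-Real.pi) Real.pi, g n θ with hd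
  have hgcont : ∀ n : ℤ, Continuous (g n) := by
    intro n
    exact hw.mul (Complex.continuous_exp.comp (by continuity))
  set S : Set (Fin N → ℝ) := Set.univ.pi (fun _ => Set.Icc (-Real.pi) Real.pi) with hS
  have hSmeas : MeasurableSet S := MeasurableSet.univ_pi (fun _ => measurableSet_Icc)
  have hScompact : IsCompact S := isCompact_univ_pi (fun _ => isCompact_Icc)
  -- pointwise identity
  have hpt : ∀ θ : Fin N → ℝ,
      (∏ l, w (θ l)) *
      ((∏ p ∈ Finset.univ.filter (fun p : Fin N × Fin N => p.1 < p.2),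
        (‖Complex.exp (Complex.I * θ p.2) - Complex.exp (Complex.I * θ p.1)‖) ^ 2
        : ℝ) : ℂ)
      = ∑ σ : Equiv.Perm (Fin N), ∑ τ : Equiv.Perm (Fin N),
          ((Equiv.Perm.sign σ : ℤ) : ℂ) * ((Equiv.Perm.sign τ : ℤ) : ℂ) *
            ∏ l, g (((σ l : ℕ) : ℤ) - ((τ l : ℕ) : ℤ)) (θ l) := by
    intro θ
    set z : Fin N → ℂ := fun l => Complex.exp (Complex.I * (θ l : ℂ)) with hz
    have hcast : ((∏ p ∈ Finset.univ.filter (fun p : Fin N × Fin N => p.1 < p.2),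
        (‖Complex.exp (Complex.I * θ p.2) - Complex.exp (Complex.I * θ p.1)‖) ^ 2
        : ℝ) : ℂ)
        = (∏ p ∈ Finset.univ.filter (fun p : Fin N × Fin N => p.1 < p.2), (z p.2 - z p.1)) *
          (∏ p ∈ Finset.univ.filter (fun p : Fin N × Fin N => p.1 < p.2),
            (starRingEnd ℂ) (z p.2 - z p.1)) := by
      rw [← Finset.prod_mul_distrib]
      push_cast
      apply Finset.prod_congr rfl
      intro p _
      rw [← Complex.ofReal_pow, Complex.sq_norm]
      exact (Complex.mul_conj _).symm
    rw [hcast]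
    have hvdm : ∀ u : Fin N → ℂ,
        (∏ p ∈ Finset.univ.filter (fun p : Fin N × Fin N => p.1 < p.2), (u p.2 - u p.1))
        = ∑ σ : Equiv.Perm (Fin N), ((Equiv.Perm.sign σ : ℤ) : ℂ) * ∏ l, u l ^ (σ l : ℕ) := by
      intro u
      rw [prod_filter_lt (fun i j => u j - u i), ← Matrix.det_vandermonde,
        ← Matrix.det_transpose, Matrix.det_apply]
      apply Finset.sum_congr rfl
      intro σ _
      rw [Units.smul_def, zsmul_eq_mul]
      push_cast
      congr 1
    have hconjz : ∀ l, (starRingEnd ℂ) (z l) = Complex.exp (-(Complex.I * (θ l : ℂ))) := by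
      intro l
      rw [hz]
      rw [← Complex.exp_conj]
      congr 1
      simp [Complex.conj_ofReal]
    rw [hvdm z]
    have hconjdet : (∏ p ∈ Finset.univ.filter (fun p : Fin N × Fin N => p.1 < p.2),
            (starRingEnd ℂ) (z p.2 - z p.1))
        = ∑ τ : Equiv.Perm (Fin N), ((Equiv.Perm.sign τ : ℤ) : ℂ) *
            ∏ l, Complex.exp (-(Complex.I * (θ l : ℂ))) ^ (τ l : ℕ) := by
      rw [← map_prod, hvdm z, map_sum]
      apply Finset.sum_congr rfl
      intro τ _
      rw [map_mul, map_prod]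
      congr 1
      · simp
      · apply Finset.prod_congr rfl
        intro l _
        rw [map_pow, hconjz]
    rw [hconjdet, Finset.sum_mul_sum, Finset.mul_sum]
    apply Finset.sum_congr rfl; intro σ _
    rw [Finset.mul_sum]
    apply Finset.sum_congr rfl; intro τ _
    have hterm : ∏ l, g (((σ l : ℕ) : ℤ) - ((τ l : ℕ) : ℤ)) (θ l)
        = (∏ l, w (θ l)) *
          ((∏ l, z l ^ (σ l : ℕ)) * ∏ l, Complex.exp (-(Complex.I * (θ l : ℂ))) ^ (τ l : ℕ)) := by
      rw [← Finset.prod_mul_distrib, ← Finset.prod_mul_distrib]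
      apply Finset.prod_congr rfl
      intro l _
      rw [hg]
      simp only []
      rw [mul_assoc]
      congr 1
      rw [hz]
      simp only []
      rw [← Complex.exp_nat_mul, ← Complex.exp_nat_mul, ← Complex.exp_add]
      congr 1
      push_cast
      ring
    rw [hterm]
    ring
  -- integrate term by term
  have hint1 : ∀ (n : Fin N → ℤ),
      (∫ θ : Fin N → ℝ in S, ∏ l, g (n l) (θ l)) = ∏ l, d (n l) := by
    intro n
    rw [← MeasureTheory.integral_indicator hSmeas]
    have hind : S.indicator (fun θ : Fin N → ℝ => ∏ l, g (n l) (θ l))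
        = fun θ : Fin N → ℝ =>
            ∏ l, (Set.Icc (-Real.pi) Real.pi).indicator (g (n l)) (θ l) := by
      funext θ
      by_cases hθ : θ ∈ S
      · rw [Set.indicator_of_mem hθ]
        apply Finset.prod_congr rfl
        intro l _
        rw [Set.indicator_of_mem (by exact hθ l (Set.mem_univ l))]
      · rw [Set.indicator_of_notMem hθ]
        symm
        rw [hS] at hθ
        rw [Set.mem_univ_pi] at hθ
        push_neg at hθ
        obtain ⟨l, hl⟩ := hθ
        exact Finset.prod_eq_zero (Finset.mem_univ l) (Set.indicator_of_notMem hl _)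
    rw [hind, MeasureTheory.integral_fintype_prod_volume_eq_prod (ι := Fin N)
      (f := fun l => (Set.Icc (-Real.pi) Real.pi).indicator (g (n l)))]
    apply Finset.prod_congr rfl
    intro l _
    rw [MeasureTheory.integral_indicator measurableSet_Icc]
  have hintegrable : ∀ (n : Fin N → ℤ),
      IntegrableOn (fun θ : Fin N → ℝ => ∏ l, g (n l) (θ l)) S := by
    intro n
    have hc : Continuous (fun θ : Fin N → ℝ => ∏ l, g (n l) (θ l)) :=
      continuous_finset_prod _ (fun l _ => (hgcont (n l)).comp (continuous_apply l))
    exact hc.continuousOn.integrableOn_compact hScompact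
  -- the integral as double sum
  have hswap : (∫ θ : Fin N → ℝ in S,
      (∏ l, w (θ l)) *
      ((∏ p ∈ Finset.univ.filter (fun p : Fin N × Fin N => p.1 < p.2),
        (‖Complex.exp (Complex.I * θ p.2) - Complex.exp (Complex.I * θ p.1)‖) ^ 2
        : ℝ) : ℂ))
      = ∑ σ : Equiv.Perm (Fin N), ∑ τ : Equiv.Perm (Fin N),
          ((Equiv.Perm.sign σ : ℤ) : ℂ) * ((Equiv.Perm.sign τ : ℤ) : ℂ) *
            ∏ l, d ((((σ l : ℕ) : ℤ)) - ((τ l : ℕ) : ℤ)) := by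
    rw [MeasureTheory.integral_congr_ae (Filter.Eventually.of_forall hpt)]
    rw [MeasureTheory.integral_finset_sum]
    · apply Finset.sum_congr rfl
      intro σ _
      rw [MeasureTheory.integral_finset_sum]
      · apply Finset.sum_congr rfl
        intro τ _
        rw [MeasureTheory.integral_const_mul, hint1]
      · intro τ _
        exact ((hintegrable _).const_mul _)
    · intro σ _
      apply MeasureTheory.integrable_finset_sum
      intro τ _
      exact ((hintegrable _).const_mul _)
  -- rearrange the double sum
  have hrearr : (∑ σ : Equiv.Perm (Fin N), ∑ τ : Equiv.Perm (Fin N),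
          ((Equiv.Perm.sign σ : ℤ) : ℂ) * ((Equiv.Perm.sign τ : ℤ) : ℂ) *
            ∏ l, d ((((σ l : ℕ) : ℤ)) - ((τ l : ℕ) : ℤ)))
      = (N.factorial : ℂ) * ∑ π : Equiv.Perm (Fin N),
          ((Equiv.Perm.sign π : ℤ) : ℂ) * ∏ k, d ((((π k : ℕ) : ℤ)) - ((k : ℕ) : ℤ)) := by
    rw [Finset.sum_comm]
    have hinner : ∀ τ : Equiv.Perm (Fin N),
        (∑ σ : Equiv.Perm (Fin N),
          ((Equiv.Perm.sign σ : ℤ) : ℂ) * ((Equiv.Perm.sign τ : ℤ) : ℂ) *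
            ∏ l, d ((((σ l : ℕ) : ℤ)) - ((τ l : ℕ) : ℤ)))
        = ∑ π : Equiv.Perm (Fin N),
          ((Equiv.Perm.sign π : ℤ) : ℂ) * ∏ k, d ((((π k : ℕ) : ℤ)) - ((k : ℕ) : ℤ)) := by
      intro τ
      rw [← Equiv.sum_comp (Equiv.mulRight τ)
        (fun σ => ((Equiv.Perm.sign σ : ℤ) : ℂ) * ((Equiv.Perm.sign τ : ℤ) : ℂ) *
            ∏ l, d ((((σ l : ℕ) : ℤ)) - ((τ l : ℕ) : ℤ)))]
      apply Finset.sum_congr rfl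
      intro π _
      simp only [Equiv.coe_mulRight]
      have hsign : ((Equiv.Perm.sign (π * τ) : ℤ) : ℂ) * ((Equiv.Perm.sign τ : ℤ) : ℂ)
          = ((Equiv.Perm.sign π : ℤ) : ℂ) := by
        have h1 : ((Equiv.Perm.sign τ : ℤ) : ℂ) * ((Equiv.Perm.sign τ : ℤ) : ℂ) = 1 := by
          rcases Int.units_eq_one_or (Equiv.Perm.sign τ) with h | h <;> simp [h]
        rw [Equiv.Perm.sign_mul, Units.val_mul]
        push_cast
        rw [mul_assoc, h1, mul_one]
      rw [hsign]
      congr 1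
      rw [← Equiv.prod_comp τ (fun m => d (((π m : ℕ) : ℤ) - ((m : ℕ) : ℤ)))]
      apply Finset.prod_congr rfl
      intro l _
      rfl
    rw [Finset.sum_congr rfl (fun τ _ => hinner τ), Finset.sum_const, Finset.card_univ,
      Fintype.card_perm, Fintype.card_fin, nsmul_eq_mul]
  -- assemble
  rw [uAvg, hswap, hrearr, Matrix.det_apply]
  have hdet : ∀ π : Equiv.Perm (Fin N),
      (Equiv.Perm.sign π •
        ∏ k, (Matrix.of fun j k : Fin N =>
          (((2 * Real.pi : ℝ) : ℂ))⁻¹ *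
            ∫ θ : ℝ in Set.Icc (-Real.pi) Real.pi,
              w θ * Complex.exp (Complex.I * ((((j:ℕ) : ℤ) - ((k:ℕ) : ℤ) : ℤ) : ℂ) * (θ:ℂ))) (π k) k)
      = ((Equiv.Perm.sign π : ℤ) : ℂ) * (((2 * Real.pi : ℝ) : ℂ))⁻¹ ^ N *
          ∏ k, d ((((π k : ℕ) : ℤ)) - ((k : ℕ) : ℤ)) := by
    intro π
    rw [Units.smul_def, zsmul_eq_mul]
    simp only [Matrix.of_apply]
    rw [Finset.prod_mul_distrib, Finset.prod_const, Finset.card_univ, Fintype.card_fin]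
    simp only [hd, hg]
    push_cast
    ring
  rw [Finset.sum_congr rfl (fun π _ => hdet π)]
  have hfactor : ∑ π : Equiv.Perm (Fin N),
      ((Equiv.Perm.sign π : ℤ) : ℂ) * (((2 * Real.pi : ℝ) : ℂ))⁻¹ ^ N *
        ∏ k, d ((((π k : ℕ) : ℤ)) - ((k : ℕ) : ℤ))
      = (((2 * Real.pi : ℝ) : ℂ))⁻¹ ^ N * ∑ π : Equiv.Perm (Fin N),
          ((Equiv.Perm.sign π : ℤ) : ℂ) * ∏ k, d ((((π k : ℕ) : ℤ)) - ((k : ℕ) : ℤ)) := by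
    rw [Finset.mul_sum]
    exact Finset.sum_congr rfl (fun π _ => by ring)
  rw [hfactor]
  set Sc := ∑ π : Equiv.Perm (Fin N), ((Equiv.Perm.sign π : ℤ) : ℂ) *
      ∏ k, d ((((π k : ℕ) : ℤ)) - ((k : ℕ) : ℤ)) with hSc
  have hfacne : ((N.factorial : ℂ)) ≠ 0 := Nat.cast_ne_zero.mpr (Nat.factorial_ne_zero N)
  rw [Complex.ofReal_mul, Complex.ofReal_pow, Complex.ofReal_natCast, mul_inv, mul_assoc,
    inv_mul_cancel_left₀ hfacne, inv_pow]

end aux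

theorem stmt_4 (N : ℕ) (hN : 1 ≤ N) (μ : ℤ) (t : ℝ) (ht : 0 < t) :
    uAvg N (fun θ => Complex.exp (Complex.I * (μ : ℂ) * θ) *
        Complex.exp (((Real.sqrt t / 2 : ℝ) : ℂ) *
          (Complex.exp (Complex.I * θ) + (Complex.exp (Complex.I * θ))⁻¹)))
      = ((Matrix.det (Matrix.of fun j k : Fin N =>
          besselI ((μ : ℝ) + (j : ℕ) - (k : ℕ)) (Real.sqrt t)) : ℝ) : ℂ) := by
  have hx : 0 < Real.sqrt t := Real.sqrt_pos.mpr ht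
  set x : ℝ := Real.sqrt t with hxdef
  set w : ℝ → ℂ := fun θ => Complex.exp (Complex.I * (μ : ℂ) * θ) *
      Complex.exp (((x / 2 : ℝ) : ℂ) *
        (Complex.exp (Complex.I * θ) + (Complex.exp (Complex.I * θ))⁻¹)) with hw
  have h1 : Continuous fun θ : ℝ => Complex.exp (Complex.I * (θ:ℂ)) :=
    Complex.continuous_exp.comp (by continuity)
  have hwc : Continuous w := by
    apply Continuous.mul
    · exact Complex.continuous_exp.comp (by continuity)
    · exact Complex.continuous_exp.comp
        (continuous_const.mul (h1.add (h1.inv₀ (fun θ => Complex.exp_ne_zero _))))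
  rw [heine N w hwc]
  have hpine : ((2 * Real.pi : ℝ) : ℂ) ≠ 0 := by
    simp only [ne_eq, Complex.ofReal_eq_zero]
    positivity
  have hentry : ∀ j k : Fin N,
      (((2 * Real.pi : ℝ) : ℂ))⁻¹ *
        (∫ θ : ℝ in Set.Icc (-Real.pi) Real.pi,
          w θ * Complex.exp (Complex.I * ((((j:ℕ) : ℤ) - ((k:ℕ) : ℤ) : ℤ) : ℂ) * (θ:ℂ)))
      = ((besselI ((μ : ℝ) + (j : ℕ) - (k : ℕ)) x : ℝ) : ℂ) := by
    intro j k
    set n : ℤ := (((j:ℕ) : ℤ) - ((k:ℕ) : ℤ)) with hn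
    have hptw : ∀ θ : ℝ, w θ * Complex.exp (Complex.I * ((n : ℤ) : ℂ) * (θ:ℂ))
        = Complex.exp (Complex.I * (((μ + n : ℤ)) : ℂ) * (θ:ℂ)) *
          Complex.exp (((x / 2 : ℝ) : ℂ) *
            (Complex.exp (Complex.I * (θ:ℂ)) + (Complex.exp (Complex.I * (θ:ℂ)))⁻¹)) := by
      intro θ
      rw [hw]
      simp only []
      rw [mul_right_comm, ← Complex.exp_add]
      congr 2
      push_cast
      ring
    rw [MeasureTheory.integral_congr_ae (Filter.Eventually.of_forall hptw),
      fourier_bessel (μ + n) hx,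
      show ((2 * Real.pi * besselI (((μ + n : ℤ)) : ℝ) x : ℝ) : ℂ)
          = ((2 * Real.pi : ℝ) : ℂ) * ((besselI (((μ + n : ℤ)) : ℝ) x : ℝ) : ℂ) from by
        push_cast; ring,
      inv_mul_cancel_left₀ hpine]
    congr 1
    congr 1
    rw [hn]
    push_cast
    ring
  have hmat : (Matrix.of fun j k : Fin N =>
      (((2 * Real.pi : ℝ) : ℂ))⁻¹ *
        ∫ θ : ℝ in Set.Icc (-Real.pi) Real.pi,
          w θ * Complex.exp (Complex.I * ((((j:ℕ) : ℤ) - ((k:ℕ) : ℤ) : ℤ) : ℂ) * (θ:ℂ)))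
      = Complex.ofRealHom.mapMatrix
          (Matrix.of fun j k : Fin N => besselI ((μ : ℝ) + (j : ℕ) - (k : ℕ)) x) := by
    ext j k
    exact hentry j k
  rw [hmat, ← RingHom.map_det]
  rfl
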